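/- In the algebra A, for every integer n ≥ 1 there is an equality E F^n − (−1)^n F^n E = ⟨n⟩ · F^{n−1} · (K q^{1−n} − K′ (−q)^{n−1})/(q − q^{−1}). -/

import Mathlib

/-- Generators of the quantum group `U_q(osp(1|2))`: `E`, `F`, `K`, and `K' = K⁻¹`. -/
inductive Gen : Type
  | E | F | K | K'

open FreeAlgebra in
/-- The defining relations of `U_q(osp(1|2))`:
`K K′ = K′ K = 1`, `K E = q² E K`, `K F = q^{−2} F K`,
`E F + F E = (K − K′)/(q − q^{−1})`. -/
inductive OspRel (q : ℂ) : FreeAlgebra ℂ Gen → FreeAlgebra ℂ Gen → Prop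
  | KK' : OspRel q (ι ℂ Gen.K * ι ℂ Gen.K') 1
  | K'K : OspRel q (ι ℂ Gen.K' * ι ℂ Gen.K) 1
  | KE : OspRel q (ι ℂ Gen.K * ι ℂ Gen.E) ((q ^ 2) • (ι ℂ Gen.E * ι ℂ Gen.K))
  | KF : OspRel q (ι ℂ Gen.K * ι ℂ Gen.F) ((q ^ 2)⁻¹ • (ι ℂ Gen.F * ι ℂ Gen.K))
  | EF : OspRel q (ι ℂ Gen.E * ι ℂ Gen.F + ι ℂ Gen.F * ι ℂ Gen.E)
      ((q - q⁻¹)⁻¹ • (ι ℂ Gen.K - ι ℂ Gen.K'))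

/-- The quantum group `U_q(osp(1|2))` specialized at `q`, presented by generators and
relations as a quotient of the free algebra. -/
abbrev A (q : ℂ) : Type := RingQuot (OspRel q)

noncomputable def Egen (q : ℂ) : A q := RingQuot.mkAlgHom ℂ (OspRel q) (FreeAlgebra.ι ℂ Gen.E)
noncomputable def Fgen (q : ℂ) : A q := RingQuot.mkAlgHom ℂ (OspRel q) (FreeAlgebra.ι ℂ Gen.F)
noncomputable def Kgen (q : ℂ) : A q := RingQuot.mkAlgHom ℂ (OspRel q) (FreeAlgebra.ι ℂ Gen.K)
noncomputable def K'gen (q : ℂ) : A q := RingQuot.mkAlgHom ℂ (OspRel q) (FreeAlgebra.ι ℂ Gen.K')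

/-- The super quantum integer `⟨n⟩ = (q^{−n} − (−q)^n)/(q + q^{−1})`. -/
noncomputable def sInt (q : ℂ) (n : ℕ) : ℂ := (q ^ (-(n : ℤ)) - (-q) ^ (n : ℤ)) / (q + q⁻¹)


section Lemmas
variable (q : ℂ)

lemma hKK' : Kgen q * K'gen q = 1 := by
  have := RingQuot.mkAlgHom_rel ℂ (OspRel.KK' (q := q))
  simpa [Kgen, K'gen, map_mul] using this

lemma hK'K : K'gen q * Kgen q = 1 := by
  have := RingQuot.mkAlgHom_rel ℂ (OspRel.K'K (q := q))
  simpa [Kgen, K'gen, map_mul] using this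

lemma hKF : Kgen q * Fgen q = (q ^ 2)⁻¹ • (Fgen q * Kgen q) := by
  have := RingQuot.mkAlgHom_rel ℂ (OspRel.KF (q := q))
  simpa [Kgen, Fgen, map_mul, map_smul] using this

lemma hEF : Egen q * Fgen q + Fgen q * Egen q = (q - q⁻¹)⁻¹ • (Kgen q - K'gen q) := by
  have := RingQuot.mkAlgHom_rel ℂ (OspRel.EF (q := q))
  simpa [Egen, Fgen, Kgen, K'gen, map_mul, map_add, map_sub, map_smul] using this

end Lemmas

section Lemmas2
variable (q : ℂ) (hq : q ≠ 0)

lemma hFK (hq : q ≠ 0) : Fgen q * Kgen q = (q ^ 2) • (Kgen q * Fgen q) := by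
  rw [hKF, smul_smul, mul_inv_cancel₀ (pow_ne_zero 2 hq), one_smul]

lemma hK'F (hq : q ≠ 0) : K'gen q * Fgen q = (q ^ 2) • (Fgen q * K'gen q) := by
  have : K'gen q * Fgen q = K'gen q * Fgen q * (Kgen q * K'gen q) := by
    rw [hKK', mul_one]
  rw [this]
  calc K'gen q * Fgen q * (Kgen q * K'gen q)
      = K'gen q * (Fgen q * Kgen q) * K'gen q := by noncomm_ring
    _ = K'gen q * ((q ^ 2) • (Kgen q * Fgen q)) * K'gen q := by rw [hFK q hq]
    _ = (q ^ 2) • (K'gen q * Kgen q * (Fgen q * K'gen q)) := by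
        simp only [mul_smul_comm, smul_mul_assoc]; noncomm_ring
    _ = (q ^ 2) • (Fgen q * K'gen q) := by rw [hK'K, one_mul]

lemma comm_claim (hq : q ≠ 0) (a b : ℂ) :
    (a • Kgen q - b • K'gen q) * Fgen q
      = Fgen q * ((a * (q ^ 2)⁻¹) • Kgen q - (b * q ^ 2) • K'gen q) := by
  rw [sub_mul, mul_sub, smul_mul_assoc, smul_mul_assoc, hKF, hK'F q hq]
  simp only [smul_smul, mul_smul_comm]

end Lemmas2

section Scalars
variable (q : ℂ)

lemma hane (hq : q ≠ 0) (hq4 : q ^ 4 ≠ 1) : q ^ 2 + 1 ≠ 0 := by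
  intro h
  exact hq4 (by linear_combination (q^2 - 1) * h)

lemma hbne (hq : q ≠ 0) (hq4 : q ^ 4 ≠ 1) : q ^ 2 - 1 ≠ 0 := by
  intro h
  exact hq4 (by linear_combination (q^2 + 1) * h)

lemma hq2ne (hq : q ≠ 0) (hq4 : q ^ 4 ≠ 1) : q + q⁻¹ ≠ 0 := by
  have := hane q hq hq4
  intro h; apply this; field_simp at h; linear_combination h

lemma hqdne (hq : q ≠ 0) (hq4 : q ^ 4 ≠ 1) : q - q⁻¹ ≠ 0 := by
  have := hbne q hq hq4
  intro h; apply this; field_simp at h; linear_combination h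

lemma coefrw (hq : q ≠ 0) (hq4 : q ^ 4 ≠ 1) (c : ℂ) :
    c / (q + q⁻¹) / (q - q⁻¹) = c * q ^ 2 / ((q ^ 2 + 1) * (q ^ 2 - 1)) := by
  have ha := hane q hq hq4
  have hb := hbne q hq hq4
  have h1 := hq2ne q hq hq4
  have h2 := hqdne q hq hq4
  rw [div_div, div_eq_div_iff (mul_ne_zero h1 h2) (mul_ne_zero ha hb)]
  field_simp

lemma invrw (hq : q ≠ 0) (hq4 : q ^ 4 ≠ 1) :
    (q - q⁻¹)⁻¹ = q / (q ^ 2 - 1) := by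
  have hb := hbne q hq hq4
  rw [show q - q⁻¹ = (q ^ 2 - 1) / q by field_simp, inv_div]

lemma zpow_facts (hq : q ≠ 0) (n : ℕ) :
    q ^ (1 - (n : ℤ)) = q * (q ^ n)⁻¹ ∧
    q ^ (-(n : ℤ)) = (q ^ n)⁻¹ ∧
    (-q : ℂ) ^ (n : ℤ) = (-1 : ℂ) ^ n * q ^ n ∧
    (-q : ℂ) ^ ((n : ℤ) - 1) = (-1 : ℂ) ^ n * q ^ n * (-q)⁻¹ := by
  have hnq : (-q : ℂ) ≠ 0 := neg_ne_zero.mpr hq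
  refine ⟨?_, ?_, ?_, ?_⟩
  · rw [zpow_sub₀ hq, zpow_one, zpow_natCast, div_eq_mul_inv]
  · rw [zpow_neg, zpow_natCast]
  · rw [zpow_natCast, neg_pow]
  · rw [zpow_sub₀ hnq, zpow_one, zpow_natCast, neg_pow, div_eq_mul_inv]

lemma key1 (X s : ℂ) (hq : q ≠ 0) (hX : X ≠ 0) (hq4 : q ^ 4 ≠ 1)
    (hs : s = 1 ∨ s = -1) :
    (X⁻¹ - s * X) * q ^ 2 / ((q ^ 2 + 1) * (q ^ 2 - 1)) * (q * X⁻¹ * (q ^ 2)⁻¹)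
        + s * (q / (q ^ 2 - 1))
      = ((X * q)⁻¹ + s * X * q) * q ^ 2 / ((q ^ 2 + 1) * (q ^ 2 - 1)) * X⁻¹ := by
  have ha := hane q hq hq4
  have hb := hbne q hq hq4
  have hD1 : ((q ^ 2 + 1) * (q ^ 2 - 1) : ℂ) ≠ 0 := mul_ne_zero ha hb
  rw [div_mul_eq_mul_div, div_mul_eq_mul_div, ← mul_div_assoc,
    div_add_div _ _ hD1 hb, div_eq_div_iff (mul_ne_zero hD1 hb) hD1]
  rcases hs with h | h <;> subst h <;> field_simp <;> ring

lemma key2 (X s : ℂ) (hq : q ≠ 0) (hX : X ≠ 0) (hq4 : q ^ 4 ≠ 1)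
    (hs : s = 1 ∨ s = -1) :
    (X⁻¹ - s * X) * q ^ 2 / ((q ^ 2 + 1) * (q ^ 2 - 1)) * (s * X * (-q)⁻¹ * q ^ 2)
        + s * (q / (q ^ 2 - 1))
      = ((X * q)⁻¹ + s * X * q) * q ^ 2 / ((q ^ 2 + 1) * (q ^ 2 - 1)) * (s * X) := by
  have ha := hane q hq hq4
  have hb := hbne q hq hq4
  have hD1 : ((q ^ 2 + 1) * (q ^ 2 - 1) : ℂ) ≠ 0 := mul_ne_zero ha hb
  rw [div_mul_eq_mul_div, div_mul_eq_mul_div, ← mul_div_assoc,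
    div_add_div _ _ hD1 hb, div_eq_div_iff (mul_ne_zero hD1 hb) hD1]
  rcases hs with h | h <;> subst h <;> field_simp <;> ring

end Scalars

/-- In `A`: `E F^n − (−1)^n F^n E = ⟨n⟩ F^{n−1} (K q^{1−n} − K′ (−q)^{n−1})/(q − q^{−1})`
for all `n ≥ 1`. -/
theorem statement4 (q : ℂ) (hq : q ≠ 0) (hq4 : q ^ 4 ≠ 1) (n : ℕ) (hn : 1 ≤ n) :
    Egen q * Fgen q ^ n - ((-1 : ℂ) ^ n) • (Fgen q ^ n * Egen q)
      = (sInt q n / (q - q⁻¹)) •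
          (Fgen q ^ (n - 1) *
            ((q ^ (1 - (n : ℤ))) • Kgen q - ((-q) ^ ((n : ℤ) - 1)) • K'gen q)) := by
  induction n, hn using Nat.le_induction with
  | base =>
    simp only [pow_one, Nat.sub_self, pow_zero, one_mul, Nat.cast_one]
    norm_num
    have h1 : sInt q 1 = 1 := by
      unfold sInt
      have hq2 := hq2ne q hq hq4
      push_cast
      rw [zpow_neg, zpow_one, zpow_one, sub_neg_eq_add, add_comm, div_self hq2]
    rw [h1, one_div, ← hEF q]
    module
  | succ n hn ih =>
    have hE : Egen q * Fgen q ^ n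
        = ((-1 : ℂ) ^ n) • (Fgen q ^ n * Egen q)
          + (sInt q n / (q - q⁻¹)) •
            (Fgen q ^ (n - 1) *
              ((q ^ (1 - (n : ℤ))) • Kgen q - ((-q) ^ ((n : ℤ) - 1)) • K'gen q)) :=
      sub_eq_iff_eq_add'.mp ih
    have hEF' : Egen q * Fgen q = (q - q⁻¹)⁻¹ • (Kgen q - K'gen q) - Fgen q * Egen q :=
      eq_sub_of_add_eq (hEF q)
    have hpow : Fgen q ^ (n - 1) * Fgen q = Fgen q ^ n := by
      rw [← pow_succ, Nat.sub_add_cancel hn]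
    have main : Egen q * Fgen q ^ (n + 1)
        = ((-1 : ℂ) ^ n) • (Fgen q ^ n * ((q - q⁻¹)⁻¹ • (Kgen q - K'gen q)))
          - ((-1 : ℂ) ^ n) • (Fgen q ^ (n + 1) * Egen q)
          + (sInt q n / (q - q⁻¹)) •
            (Fgen q ^ n *
              ((q ^ (1 - (n : ℤ)) * (q ^ 2)⁻¹) • Kgen q
                - ((-q) ^ ((n : ℤ) - 1) * q ^ 2) • K'gen q)) := by
      calc Egen q * Fgen q ^ (n + 1)
          = (Egen q * Fgen q ^ n) * Fgen q := by rw [pow_succ, ← mul_assoc]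
        _ = ((-1 : ℂ) ^ n) • (Fgen q ^ n * Egen q * Fgen q)
            + (sInt q n / (q - q⁻¹)) •
              (Fgen q ^ (n - 1) *
                (((q ^ (1 - (n : ℤ))) • Kgen q - ((-q) ^ ((n : ℤ) - 1)) • K'gen q)
                  * Fgen q)) := by
            simp only [hE, add_mul, smul_mul_assoc, mul_assoc]
        _ = ((-1 : ℂ) ^ n) • (Fgen q ^ n * (Egen q * Fgen q))
            + (sInt q n / (q - q⁻¹)) •
              ((Fgen q ^ (n - 1) * Fgen q) *
                ((q ^ (1 - (n : ℤ)) * (q ^ 2)⁻¹) • Kgen q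
                  - ((-q) ^ ((n : ℤ) - 1) * q ^ 2) • K'gen q)) := by
            rw [comm_claim q hq, mul_assoc, mul_assoc]
        _ = _ := by
            rw [hpow, hEF', mul_sub, smul_sub, ← mul_assoc, ← pow_succ, sub_eq_add_neg,
              add_assoc, add_comm (-(((-1 : ℂ) ^ n) • (Fgen q ^ (n + 1) * Egen q))),
              ← add_assoc, ← sub_eq_add_neg]
    simp only [pow_succ (-1 : ℂ), mul_neg_one, neg_smul, sub_neg_eq_add,
      Nat.add_sub_cancel]
    rw [main]
    have hX : (q : ℂ) ^ n ≠ 0 := pow_ne_zero n hq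
    have hs : ((-1 : ℂ) ^ n) = 1 ∨ ((-1 : ℂ) ^ n) = -1 := by
      rcases Nat.even_or_odd n with h | h
      exacts [Or.inl h.neg_one_pow, Or.inr h.neg_one_pow]
    obtain ⟨e1, e2, e3, e4⟩ := zpow_facts q hq n
    obtain ⟨f1, f2, f3, f4⟩ := zpow_facts q hq (n + 1)
    have g1 : q ^ (1 - ((n : ℕ) + 1 : ℤ)) = (q ^ n)⁻¹ := by
      rw [show (1 - ((n : ℕ) + 1 : ℤ)) = -(n : ℤ) by ring, e2]
    have g2 : (-q : ℂ) ^ (((n : ℕ) + 1 : ℤ) - 1) = (-1 : ℂ) ^ n * q ^ n := by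
      rw [show (((n : ℕ) + 1 : ℤ) - 1) = (n : ℤ) by ring, e3]
    have hc1 : sInt q n / (q - q⁻¹)
        = ((q ^ n)⁻¹ - (-1 : ℂ) ^ n * q ^ n) * q ^ 2 / ((q ^ 2 + 1) * (q ^ 2 - 1)) := by
      unfold sInt
      rw [e2, e3, coefrw q hq hq4]
    have hc2 : sInt q (n + 1) / (q - q⁻¹)
        = ((q ^ n * q)⁻¹ + (-1 : ℂ) ^ n * q ^ n * q) * q ^ 2
            / ((q ^ 2 + 1) * (q ^ 2 - 1)) := by
      unfold sInt
      push_cast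
      rw [show (-(((n : ℕ) : ℤ) + 1)) = -(((n + 1 : ℕ)) : ℤ) by push_cast; ring, f2,
        show ((((n : ℕ) : ℤ) + 1)) = (((n + 1 : ℕ)) : ℤ) by push_cast; ring, f3,
        coefrw q hq hq4, pow_succ, pow_succ, mul_neg_one, neg_mul, sub_neg_eq_add]
      ring_nf
    push_cast
    rw [hc1, hc2, e1, e4, g1, g2, invrw q hq hq4]
    simp only [mul_sub, mul_smul_comm, smul_sub, smul_smul]
    match_scalars
    · linear_combination key1 q (q ^ n) ((-1 : ℂ) ^ n) hq hX hq4 hs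
    · linear_combination -key2 q (q ^ n) ((-1 : ℂ) ^ n) hq hX hq4 hs
    · ring
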